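/- Let τ = e^{−πi/9} and ω = e^{2πi/3}. The subgroup of GL(3,ℂ) generated by a = τ·diag(ω², −ω², ω) and b = τ·[[ω/2, −ω/2, ω²/√2],[−ω/2, ω/2, ω²/√2],[ω²/√2, ω²/√2, 0]] is isomorphic (as an abstract group) to the subgroup D(9,1,1;2,1,1) of GL(3,ℂ) generated by the three matrices E = [[0,1,0],[0,0,1],[1,0,0]], F = diag(e^{2πi/9}, e^{2πi/9}, e^{−4πi/9}), and G = [[e^{πi}, 0, 0],[0, 0, e^{πi}],[0, −e^{−2πi}, 0]] = [[−1,0,0],[0,0,−1],[0,−1,0]]. -/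

import Mathlib

/-!
Conjugation by `X = [[1,1,0],[0,0,√2],[1,-1,0]]` turns `a` and `b` into the monomial matrices
`A = EFG` and `B = FGE`, whose entries are 18th roots of unity. Conversely `G = ABA`,
`F = A⁶B⁴` and `E = B³A⁻³`, so `A` and `B` generate the same group as `E`, `F`, `G`.
-/

open Matrix Complex

noncomputable section

/-- ω = e^{2πi/3}, a primitive third root of unity. -/
def ω : ℂ := Complex.exp (2 * Real.pi * Complex.I / 3)

/-- τ = e^{−πi/9}. -/
def τ : ℂ := Complex.exp (-(Real.pi * Complex.I) / 9)

/-- a = τ·diag(ω², −ω², ω). -/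
def ma : Matrix (Fin 3) (Fin 3) ℂ := τ • diagonal ![ω ^ 2, -ω ^ 2, ω]

/-- b = τ·[[ω/2, −ω/2, ω²/√2],[−ω/2, ω/2, ω²/√2],[ω²/√2, ω²/√2, 0]]. -/
def mb : Matrix (Fin 3) (Fin 3) ℂ :=
  τ • !![ω / 2, -ω / 2, ω ^ 2 / (Real.sqrt 2 : ℂ);
         -ω / 2, ω / 2, ω ^ 2 / (Real.sqrt 2 : ℂ);
         ω ^ 2 / (Real.sqrt 2 : ℂ), ω ^ 2 / (Real.sqrt 2 : ℂ), 0]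

/-- The cyclic permutation matrix E. -/
def mE : Matrix (Fin 3) (Fin 3) ℂ := !![0, 1, 0; 0, 0, 1; 1, 0, 0]

/-- F(9,1,1) = diag(e^{2πi/9}, e^{2πi/9}, e^{−4πi/9}). -/
def mF : Matrix (Fin 3) (Fin 3) ℂ :=
  diagonal ![Complex.exp (2 * Real.pi * Complex.I / 9),
             Complex.exp (2 * Real.pi * Complex.I / 9),
             Complex.exp (-(4 * Real.pi * Complex.I) / 9)]

/-- G(2,1,1) = [[−1,0,0],[0,0,−1],[0,−1,0]]. -/
def mG : Matrix (Fin 3) (Fin 3) ℂ := !![-1, 0, 0; 0, 0, -1; 0, -1, 0]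

section GroupTheory

variable {G H : Type*} [Group G] [Group H]

def MulEquiv.subgroupClosure (e : G ≃* H) (s : Set G) :
    Subgroup.closure s ≃* Subgroup.closure (e '' s) :=
  (e.subgroupMap _).trans (MulEquiv.subgroupCongr (MonoidHom.map_closure _ _))

theorem Subgroup.closure_pair_eq_closure_triple_of_relations {A B e f g : G}
    (hA : A = e * f * g) (hB : B = f * g * e)
    (he : e * A ^ 3 = B ^ 3) (hf : f = A ^ 6 * B ^ 4) (hg : g = A * B * A) :
    closure {A, B} = closure {e, f, g} := by
  have hA_mem : A ∈ closure {A, B} := subset_closure (by simp)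
  have hB_mem : B ∈ closure {A, B} := subset_closure (by simp)
  have he_mem : e ∈ closure {e, f, g} := subset_closure (by simp)
  have hf_mem : f ∈ closure {e, f, g} := subset_closure (by simp)
  have hg_mem : g ∈ closure {e, f, g} := subset_closure (by simp)
  apply le_antisymm <;>
    simp only [closure_le, Set.insert_subset_iff, Set.singleton_subset_iff, SetLike.mem_coe]
  · rw [hA, hB]
    exact ⟨mul_mem (mul_mem he_mem hf_mem) hg_mem, mul_mem (mul_mem hf_mem hg_mem) he_mem⟩
  · rw [eq_mul_inv_of_mul_eq he, hf, hg]
    exact ⟨mul_mem (pow_mem hB_mem 3) (inv_mem (pow_mem hA_mem 3)),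
      mul_mem (pow_mem hA_mem 6) (pow_mem hB_mem 4), mul_mem (mul_mem hA_mem hB_mem) hA_mem⟩

end GroupTheory

/- `ψ k = exp (2πik/18)`. Every matrix entry below is `0`, an 18th root of unity, or such a root
divided by `2` or `√2`; exponents live in `ZMod 18` and `reduce_mod_char` normalizes them. -/
local notation "ψ" => (ZMod.stdAddChar : AddChar (ZMod 18) ℂ)

lemma stdAddChar_nine_eq_neg_one : ψ 9 = -1 := by
  have h := ZMod.stdAddChar_coe (N := 18) 9
  push_cast at h
  rw [h, ← Complex.exp_pi_mul_I]
  ring_nf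

lemma neg_stdAddChar_eq (k : ZMod 18) : -ψ k = ψ (k + 9) := by
  rw [AddChar.map_add_eq_mul, stdAddChar_nine_eq_neg_one, mul_neg_one]

lemma ω_eq : ω = ψ 6 := by
  have h := ZMod.stdAddChar_coe (N := 18) 6
  push_cast at h
  rw [h, ω]
  ring_nf

lemma τ_eq : τ = ψ 17 := by
  have h := ZMod.stdAddChar_coe (N := 18) (-1)
  push_cast at h
  rw [show (17 : ZMod 18) = -1 from rfl, h, τ]
  ring_nf

lemma mF_eq_diagonal : mF = diagonal ![ψ 2, ψ 2, ψ 14] := by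
  have h2 := ZMod.stdAddChar_coe (N := 18) 2
  have h14 := ZMod.stdAddChar_coe (N := 18) (-4)
  push_cast at h2 h14
  rw [show (14 : ZMod 18) = -4 from rfl, h2, h14, mF]
  ring_nf

lemma ma_eq_diagonal : ma = diagonal ![ψ 11, ψ 2, ψ 5] := by
  rw [ma, ω_eq, τ_eq, ← diagonal_smul]
  congr 1
  ext i
  fin_cases i <;>
    simp [neg_stdAddChar_eq, ← AddChar.map_add_eq_mul, ← AddChar.map_nsmul_eq_pow,
      nsmul_eq_mul] <;>
    reduce_mod_char

lemma mb_eq : mb = !![ψ 5 / 2, -ψ 5 / 2, ψ 11 / (Real.sqrt 2 : ℂ);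
    -ψ 5 / 2, ψ 5 / 2, ψ 11 / (Real.sqrt 2 : ℂ);
    ψ 11 / (Real.sqrt 2 : ℂ), ψ 11 / (Real.sqrt 2 : ℂ), 0] := by
  ext i j
  fin_cases i <;> fin_cases j <;>
    simp [mb, ω_eq, τ_eq, mul_div_assoc', ← AddChar.map_add_eq_mul, ← AddChar.map_nsmul_eq_pow,
      nsmul_eq_mul] <;>
    reduce_mod_char

def mEFG : Matrix (Fin 3) (Fin 3) ℂ := !![0, 0, ψ 11; 0, ψ 5, 0; ψ 11, 0, 0]

def mFGE : Matrix (Fin 3) (Fin 3) ℂ := !![0, ψ 11, 0; ψ 11, 0, 0; 0, 0, ψ 5]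

lemma mE_mul_mF_mul_mG : mE * mF * mG = mEFG := by
  ext i j
  fin_cases i <;> fin_cases j <;>
    simp [mEFG, mE, mG, mF_eq_diagonal, neg_stdAddChar_eq, mul_apply, Fin.sum_univ_three,
      vecMul_diagonal] <;>
    reduce_mod_char

lemma mF_mul_mG_mul_mE : mF * mG * mE = mFGE := by
  ext i j
  fin_cases i <;> fin_cases j <;>
    simp [mFGE, mE, mG, mF_eq_diagonal, neg_stdAddChar_eq, mul_apply, Fin.sum_univ_three] <;>
    reduce_mod_char

lemma mEFG_sq : mEFG ^ 2 = diagonal ![ψ 4, ψ 10, ψ 4] := by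
  ext i j
  fin_cases i <;> fin_cases j <;>
    simp [sq, mEFG, mul_apply, Fin.sum_univ_three, ← AddChar.map_add_eq_mul] <;>
    reduce_mod_char

lemma mFGE_sq : mFGE ^ 2 = diagonal ![ψ 4, ψ 4, ψ 10] := by
  ext i j
  fin_cases i <;> fin_cases j <;>
    simp [sq, mFGE, mul_apply, Fin.sum_univ_three, ← AddChar.map_add_eq_mul] <;>
    reduce_mod_char

lemma mE_mul_mEFG_pow_three : mE * mEFG ^ 3 = mFGE ^ 3 := by
  rw [pow_succ, pow_succ mFGE, mEFG_sq, mFGE_sq]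
  ext i j
  fin_cases i <;> fin_cases j <;>
    simp [mE, mEFG, mFGE, mul_apply, Fin.sum_univ_three, ← AddChar.map_add_eq_mul] <;>
    reduce_mod_char

lemma mF_eq_mEFG_pow_mul_mFGE_pow : mF = mEFG ^ 6 * mFGE ^ 4 := by
  rw [show 6 = 2 * 3 by rfl, show 4 = 2 * 2 by rfl, pow_mul, pow_mul, mEFG_sq, mFGE_sq,
    diagonal_pow, diagonal_pow, diagonal_mul_diagonal, mF_eq_diagonal]
  congr 1
  ext i
  fin_cases i <;>
    simp [← AddChar.map_add_eq_mul, ← AddChar.map_nsmul_eq_pow, nsmul_eq_mul] <;>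
    reduce_mod_char

lemma mG_eq_mEFG_mul_mFGE_mul_mEFG : mG = mEFG * mFGE * mEFG := by
  ext i j
  fin_cases i <;> fin_cases j <;>
    simp [mG, mEFG, mFGE, mul_apply, Fin.sum_univ_three, ← AddChar.map_add_eq_mul] <;>
    reduce_mod_char <;>
    exact stdAddChar_nine_eq_neg_one.symm

def mX : Matrix (Fin 3) (Fin 3) ℂ := !![1, 1, 0; 0, 0, (Real.sqrt 2 : ℂ); 1, -1, 0]

lemma det_mX_ne_zero : mX.det ≠ 0 := by
  simp [mX, det_fin_three]

lemma mX_mul_ma : mX * ma = mEFG * mX := by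
  rw [ma_eq_diagonal]
  ext i j
  fin_cases i <;> fin_cases j <;>
    simp [mX, mEFG, mul_apply, Fin.sum_univ_three, mul_comm, neg_stdAddChar_eq] <;>
    reduce_mod_char

lemma ofReal_sqrt_two_sq : (Real.sqrt 2 : ℂ) ^ 2 = 2 := by
  rw [← Complex.ofReal_pow, Real.sq_sqrt zero_le_two, Complex.ofReal_ofNat]

lemma mX_mul_mb : mX * mb = mFGE * mX := by
  rw [mb_eq]
  ext i j
  fin_cases i <;> fin_cases j <;>
    simp [mX, mFGE, mul_apply, Fin.sum_univ_three] <;> field_simp <;> ring_nf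
  -- only the `(0, 2)` entry is left: `ψ 11 * 2 = ψ 11 * √2 ^ 2`
  rw [ofReal_sqrt_two_sq]

/-- The group generated by a and b is isomorphic (as an abstract group) to the
group D(9,1,1;2,1,1) generated by E, F(9,1,1) and G(2,1,1). -/
theorem stmt15 (a b eE fF gG : GL (Fin 3) ℂ)
    (ha : (a : Matrix (Fin 3) (Fin 3) ℂ) = ma)
    (hb : (b : Matrix (Fin 3) (Fin 3) ℂ) = mb)
    (hE : (eE : Matrix (Fin 3) (Fin 3) ℂ) = mE)
    (hF : (fF : Matrix (Fin 3) (Fin 3) ℂ) = mF)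
    (hG : (gG : Matrix (Fin 3) (Fin 3) ℂ) = mG) :
    Nonempty ((Subgroup.closure ({a, b} : Set (GL (Fin 3) ℂ))) ≃*
      (Subgroup.closure ({eE, fF, gG} : Set (GL (Fin 3) ℂ)))) := by
  let u : GL (Fin 3) ℂ := .mkOfDetNeZero mX det_mX_ne_zero
  have hEFG : ((eE * fF * gG : GL (Fin 3) ℂ) : Matrix (Fin 3) (Fin 3) ℂ) = mEFG := by
    push_cast [hE, hF, hG]; exact mE_mul_mF_mul_mG
  have hFGE : ((fF * gG * eE : GL (Fin 3) ℂ) : Matrix (Fin 3) (Fin 3) ℂ) = mFGE := by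
    push_cast [hE, hF, hG]; exact mF_mul_mG_mul_mE
  have hconj_a : MulAut.conj u a = eE * fF * gG := by
    rw [MulAut.conj_apply, mul_inv_eq_iff_eq_mul]; ext1; push_cast [u, ha, hEFG]; exact mX_mul_ma
  have hconj_b : MulAut.conj u b = fF * gG * eE := by
    rw [MulAut.conj_apply, mul_inv_eq_iff_eq_mul]; ext1; push_cast [u, hb, hFGE]; exact mX_mul_mb
  refine ⟨((MulAut.conj u).subgroupClosure {a, b}).trans (MulEquiv.subgroupCongr ?_)⟩
  rw [Set.image_pair, hconj_a, hconj_b]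
  refine Subgroup.closure_pair_eq_closure_triple_of_relations rfl rfl ?_ ?_ ?_ <;> ext1 <;>
    push_cast [hEFG, hFGE, hE, hF, hG]
  exacts [mE_mul_mEFG_pow_three, mF_eq_mEFG_pow_mul_mFGE_pow, mG_eq_mEFG_mul_mFGE_mul_mEFG]
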